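/- Expansion of the inverse estimated weight matrix around the true value: assume the moment function is linear in θ, the data are i.i.d. with E‖g(Xᵢ,θ₀)‖⁴ < ∞ and E‖G(Xᵢ)‖⁴ < ∞, Ω = Ω(θ₀) is nonsingular, Ω_n(θ₀) and Ω_n(θ̂₁) are invertible with probability approaching one, and θ̂₁ − θ₀ = O_p(n^{−1/2}). Then [Ω_n(θ̂₁)]⁻¹ = [Ω_n(θ₀)]⁻¹ − n^{−1/2} Ω⁻¹ (∑_j (∂Ω(θ₀)/∂θ_j) √n(θ̂_{1,j} − θ_{0,j})) Ω⁻¹ + O_p(n⁻¹). -/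

import Mathlib

open Matrix Filter MeasureTheory ProbabilityTheory

attribute [local instance] Matrix.normedAddCommGroup

attribute [local instance] Matrix.normedSpace

set_option maxHeartbeats 1600000

noncomputable section

/-- `Z_n = O_p(a_n)`: the sequence `{Z_n / a_n}` is bounded in probability — for every
`ε > 0` there is `M > 0` with `P(‖Z_n‖ / a_n > M) < ε` for all sufficiently large `n`. -/
def IsBigOp {Ωs : Type*} [MeasurableSpace Ωs] (P : Measure Ωs)
    {E : Type*} [Norm E] (Z : ℕ → Ωs → E) (a : ℕ → ℝ) : Prop :=
  ∀ ε : ℝ, 0 < ε → ∃ M : ℝ, 0 < M ∧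
    ∀ᶠ n in atTop, P {ω | M < ‖Z n ω‖ / a n} < ENNReal.ofReal ε

namespace InvWAux

lemma norm_mul_le' {m n p : ℕ} (A : Matrix (Fin m) (Fin n) ℝ) (B : Matrix (Fin n) (Fin p) ℝ) :
    ‖A * B‖ ≤ (n : ℝ) * ‖A‖ * ‖B‖ := by
  have h0 : (0:ℝ) ≤ (n : ℝ) * ‖A‖ * ‖B‖ := by positivity
  rw [Matrix.norm_le_iff h0]
  intro i j
  calc ‖(A * B) i j‖ = |∑ l, A i l * B l j| := by simp [Matrix.mul_apply]
    _ ≤ ∑ l, |A i l * B l j| := Finset.abs_sum_le_sum_abs _ _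
    _ ≤ ∑ _l : Fin n, ‖A‖ * ‖B‖ := by
        refine Finset.sum_le_sum fun l _ => ?_
        rw [abs_mul]
        exact mul_le_mul (A.norm_entry_le_entrywise_sup_norm)
          (B.norm_entry_le_entrywise_sup_norm) (abs_nonneg _) (norm_nonneg _)
    _ = (n : ℝ) * ‖A‖ * ‖B‖ := by simp [mul_assoc]

lemma norm_mul3_le {q : ℕ} (A B C : Matrix (Fin q) (Fin q) ℝ) :
    ‖A * B * C‖ ≤ (q : ℝ)^2 * ‖A‖ * ‖B‖ * ‖C‖ := by
  calc ‖A * B * C‖ ≤ (q:ℝ) * ‖A * B‖ * ‖C‖ := norm_mul_le' _ _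
    _ ≤ (q:ℝ) * ((q:ℝ) * ‖A‖ * ‖B‖) * ‖C‖ := by
        have h1 := norm_mul_le' A B
        have h2 : (0:ℝ) ≤ (q:ℝ) := Nat.cast_nonneg q
        have h3 := norm_nonneg C
        have := mul_le_mul_of_nonneg_left h1 h2
        exact mul_le_mul_of_nonneg_right this h3
    _ = (q : ℝ)^2 * ‖A‖ * ‖B‖ * ‖C‖ := by ring

lemma inv_pert {q : ℕ} (Ωm B : Matrix (Fin q) (Fin q) ℝ) (hΩ : IsUnit Ωm.det)
    (hB : IsUnit B.det) (h : (q:ℝ)^2 * ‖Ωm⁻¹‖ * ‖B - Ωm‖ ≤ 1/2) :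
    ‖B⁻¹‖ ≤ 2 * ‖Ωm⁻¹‖ ∧ ‖B⁻¹ - Ωm⁻¹‖ ≤ 2 * (q:ℝ)^2 * ‖Ωm⁻¹‖^2 * ‖B - Ωm‖ := by
  have h1 : Ωm⁻¹ * Ωm = 1 := Matrix.nonsing_inv_mul _ hΩ
  have h2 : B * B⁻¹ = 1 := Matrix.mul_nonsing_inv _ hB
  have key : B⁻¹ - Ωm⁻¹ = -(Ωm⁻¹ * (B - Ωm) * B⁻¹) := by
    have : Ωm⁻¹ * (B - Ωm) * B⁻¹ = Ωm⁻¹ * (B * B⁻¹) - Ωm⁻¹ * Ωm * B⁻¹ := by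
      rw [Matrix.mul_sub, Matrix.sub_mul, Matrix.mul_assoc]
    rw [this, h1, h2, Matrix.one_mul, Matrix.mul_one]
    abel
  have hn : ‖B⁻¹ - Ωm⁻¹‖ ≤ (q:ℝ)^2 * ‖Ωm⁻¹‖ * ‖B - Ωm‖ * ‖B⁻¹‖ := by
    rw [key, norm_neg]; exact norm_mul3_le _ _ _
  have hb : ‖B⁻¹‖ ≤ 2 * ‖Ωm⁻¹‖ := by
    have h3 : ‖B⁻¹‖ ≤ ‖Ωm⁻¹‖ + ‖B⁻¹ - Ωm⁻¹‖ := by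
      calc ‖B⁻¹‖ = ‖Ωm⁻¹ + (B⁻¹ - Ωm⁻¹)‖ := by congr 1; abel
        _ ≤ _ := norm_add_le _ _
    nlinarith [norm_nonneg (B⁻¹), norm_nonneg (B⁻¹ - Ωm⁻¹)]
  refine ⟨hb, ?_⟩
  have hq : (0:ℝ) ≤ (q:ℝ)^2 * ‖Ωm⁻¹‖ * ‖B - Ωm‖ := by positivity
  calc ‖B⁻¹ - Ωm⁻¹‖ ≤ (q:ℝ)^2 * ‖Ωm⁻¹‖ * ‖B - Ωm‖ * ‖B⁻¹‖ := hn
    _ ≤ (q:ℝ)^2 * ‖Ωm⁻¹‖ * ‖B - Ωm‖ * (2 * ‖Ωm⁻¹‖) := mul_le_mul_of_nonneg_left hb hq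
    _ = 2 * (q:ℝ)^2 * ‖Ωm⁻¹‖^2 * ‖B - Ωm‖ := by ring

lemma key_identity {q : ℕ} (A B Ωi S : Matrix (Fin q) (Fin q) ℝ)
    (hA : IsUnit A.det) (hB : IsUnit B.det) :
    A⁻¹ - B⁻¹ + Ωi * S * Ωi =
      -(A⁻¹ * ((A - B) - S) * B⁻¹) - (A⁻¹ - Ωi) * S * B⁻¹ - Ωi * S * (B⁻¹ - Ωi) := by
  have h1 : A⁻¹ * A = 1 := Matrix.nonsing_inv_mul _ hA
  have h2 : B * B⁻¹ = 1 := Matrix.mul_nonsing_inv _ hB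
  have h3 : A⁻¹ * (A - B) * B⁻¹ = B⁻¹ - A⁻¹ := by
    rw [Matrix.mul_sub, h1, Matrix.sub_mul, Matrix.one_mul, Matrix.mul_assoc, h2, Matrix.mul_one]
  have expand : A⁻¹ * ((A - B) - S) * B⁻¹ = A⁻¹ * (A - B) * B⁻¹ - A⁻¹ * S * B⁻¹ := by
    rw [Matrix.mul_sub, Matrix.sub_mul]
  rw [expand, h3]
  simp only [Matrix.sub_mul, Matrix.mul_sub]
  abel

lemma mul3_bound {q : ℕ} (x y z : Matrix (Fin q) (Fin q) ℝ) {a b c : ℝ}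
    (h1 : ‖x‖ ≤ a) (h2 : ‖y‖ ≤ b) (h3 : ‖z‖ ≤ c)
    (hb : 0 ≤ b) (_hc : 0 ≤ c) :
    ‖x * y * z‖ ≤ (q:ℝ)^2 * a * b * c := by
  have ha : 0 ≤ a := (norm_nonneg x).trans h1
  have g1 : (q:ℝ)^2 * ‖x‖ ≤ (q:ℝ)^2 * a := mul_le_mul_of_nonneg_left h1 (by positivity)
  have g2 : (q:ℝ)^2 * ‖x‖ * ‖y‖ ≤ (q:ℝ)^2 * a * b :=
    mul_le_mul g1 h2 (norm_nonneg _) (mul_nonneg (by positivity) ha)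
  have g3 : (q:ℝ)^2 * ‖x‖ * ‖y‖ * ‖z‖ ≤ (q:ℝ)^2 * a * b * c :=
    mul_le_mul g2 h3 (norm_nonneg _) (mul_nonneg (mul_nonneg (by positivity) ha) hb)
  exact (norm_mul3_le _ _ _).trans g3

lemma rpow_neg_half_eq (n : ℕ) : (n:ℝ) ^ (-(1:ℝ)/2) = (Real.sqrt n)⁻¹ := by
  rw [neg_div, Real.rpow_neg (Nat.cast_nonneg n), Real.sqrt_eq_rpow]

variable {Ωs : Type*} [MeasurableSpace Ωs] {P : Measure Ωs} [IsProbabilityMeasure P]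
  {dx : ℕ} {X : ℕ → Ωs → (Fin dx → ℝ)}

lemma sample_mean_cheb
    (hindep : iIndepFun X P)
    (hident : ∀ i : ℕ, IdentDistrib (X i) (X 0) P P)
    (f : (Fin dx → ℝ) → ℝ) (hf : Measurable f)
    (hf2 : MemLp (fun ω => f (X 0 ω)) 2 P)
    {e : ℝ} (he : 0 < e) :
    ∃ M : ℝ, 0 < M ∧ ∀ n : ℕ, 1 ≤ n →
      P {ω | M * ((n:ℝ) ^ (-(1:ℝ)/2)) <
          |(n:ℝ)⁻¹ * (∑ i ∈ Finset.range n, f (X i ω)) - ∫ ω', f (X 0 ω') ∂P|}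
        < ENNReal.ofReal e := by
  set μf := ∫ ω', f (X 0 ω') ∂P with hμf
  clear_value μf
  set V := variance (fun ω => f (X 0 ω)) P with hV
  clear_value V
  have hVnn : 0 ≤ V := hV ▸ variance_nonneg _ _
  obtain ⟨M, hM, hVM⟩ : ∃ M : ℝ, 0 < M ∧ V / M ^ 2 < e := by
    refine ⟨Real.sqrt (V / e) + 1, by positivity, ?_⟩
    rw [div_lt_iff₀ (by positivity)]
    have h1 : Real.sqrt (V/e) ^ 2 = V / e := Real.sq_sqrt (by positivity)
    have h2 : e * Real.sqrt (V/e) ^ 2 = V := by rw [h1]; field_simp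
    nlinarith [Real.sqrt_nonneg (V/e), mul_nonneg he.le (Real.sqrt_nonneg (V/e))]
  refine ⟨M, hM, fun n hn => ?_⟩
  have hnpos : (0:ℝ) < n := by exact_mod_cast hn
  have hident' : ∀ i, IdentDistrib (fun ω => f (X i ω)) (fun ω => f (X 0 ω)) P P :=
    fun i => (hident i).comp hf
  have hmem : ∀ i, MemLp (fun ω => f (X i ω)) 2 P := fun i => (hident' i).memLp_iff.mpr hf2
  set T := fun ω => ∑ i ∈ Finset.range n, f (X i ω) with hT
  have hTeq : (∑ i ∈ Finset.range n, fun ω => f (X i ω)) = T := by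
    funext ω; simp [hT]
  have hTmem : MemLp T 2 P := hTeq ▸ memLp_finset_sum' _ (fun i _ => hmem i)
  have hTmean : ∫ ω', T ω' ∂P = n * μf := by
    have hint : ∀ i ∈ Finset.range n, Integrable (fun ω => f (X i ω)) P :=
      fun i _ => (hmem i).integrable (by norm_num)
    rw [show (∫ ω', T ω' ∂P) = ∫ ω', ∑ i ∈ Finset.range n, f (X i ω') ∂P from rfl]
    rw [integral_finset_sum _ hint]
    rw [Finset.sum_congr rfl (fun i _ => (hident' i).integral_eq)]
    simp [hμf, mul_comm]
  have hindepf : iIndepFun (fun i => f ∘ X i) P :=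
    hindep.comp (fun _ => f) (fun _ => hf)
  have hTvar : variance T P = n * V := by
    have h := IndepFun.variance_sum (μ := P) (X := fun i => fun ω => f (X i ω))
      (s := Finset.range n) (fun i _ => hmem i)
      (fun i _ j _ hij => hindepf.indepFun hij)
    rw [hTeq] at h
    rw [h, Finset.sum_congr rfl (fun i _ => (hident' i).variance_eq)]
    simp [hV, mul_comm]
  clear_value T
  have hs : Real.sqrt n > 0 := Real.sqrt_pos.mpr hnpos
  have hsq : Real.sqrt n ^ 2 = (n:ℝ) := Real.sq_sqrt hnpos.le
  have hc : 0 < M * Real.sqrt n := by positivity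
  have cheb := meas_ge_le_variance_div_sq hTmem hc
  have hrhs : variance T P / (M * Real.sqrt n)^2 = V / M^2 := by
    rw [hTvar, mul_pow, hsq]
    field_simp
  have hsubset : {ω | M * ((n:ℝ) ^ (-(1:ℝ)/2)) <
          |(n:ℝ)⁻¹ * (∑ i ∈ Finset.range n, f (X i ω)) - μf|}
      ⊆ {ω | M * Real.sqrt n ≤ |T ω - P[T]|} := by
    intro ω hω
    simp only [Set.mem_setOf_eq] at hω ⊢
    rw [hTmean]
    rw [show (∑ i ∈ Finset.range n, f (X i ω)) = T ω from (congrFun hT ω).symm] at hω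
    have habs : (n:ℝ)⁻¹ * T ω - μf = (n:ℝ)⁻¹ * (T ω - n * μf) := by
      field_simp
    rw [habs, abs_mul, abs_inv, Nat.abs_cast, rpow_neg_half_eq] at hω
    have h2 : M * (Real.sqrt n)⁻¹ * (n:ℝ) < (n:ℝ)⁻¹ * |T ω - n * μf| * (n:ℝ) :=
      mul_lt_mul_of_pos_right hω hnpos
    have h3 : M * (Real.sqrt n)⁻¹ * (n:ℝ) = M * Real.sqrt n := by
      field_simp
      nlinarith [hsq]
    have h4 : (n:ℝ)⁻¹ * |T ω - n * μf| * (n:ℝ) = |T ω - n * μf| := by field_simp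
    rw [h3, h4] at h2
    exact h2.le
  calc P _ ≤ P {ω | M * Real.sqrt n ≤ |T ω - P[T]|} := measure_mono hsubset
    _ ≤ ENNReal.ofReal (variance T P / (M * Real.sqrt n)^2) := cheb
    _ = ENNReal.ofReal (V / M^2) := by rw [hrhs]
    _ < ENNReal.ofReal e := (ENNReal.ofReal_lt_ofReal_iff he).mpr hVM

lemma sample_mean_cheb_matrix {q1 q2 : ℕ}
    (hindep : iIndepFun X P)
    (hident : ∀ i : ℕ, IdentDistrib (X i) (X 0) P P)
    (F : (Fin dx → ℝ) → Matrix (Fin q1) (Fin q2) ℝ)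
    (hFmeas : ∀ r c, Measurable fun x => F x r c)
    (hF2 : ∀ r c, MemLp (fun ω => F (X 0 ω) r c) 2 P)
    (μM : Matrix (Fin q1) (Fin q2) ℝ)
    (hμM : ∀ r c, μM r c = ∫ ω', F (X 0 ω') r c ∂P)
    {e : ℝ} (he : 0 < e) :
    ∃ M : ℝ, 0 < M ∧ ∀ n : ℕ, 1 ≤ n →
      P {ω | M * ((n:ℝ) ^ (-(1:ℝ)/2)) <
          ‖(n:ℝ)⁻¹ • (∑ i ∈ Finset.range n, F (X i ω)) - μM‖}
        < ENNReal.ofReal e := by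
  have he' : 0 < e / (q1 * q2 + 1) := by positivity
  choose Mrc hMrcpos hMrc using fun (rc : Fin q1 × Fin q2) =>
    sample_mean_cheb hindep hident (fun x => F x rc.1 rc.2) (hFmeas _ _) (hF2 _ _) he'
  have hMsum : 0 ≤ ∑ rc : Fin q1 × Fin q2, Mrc rc :=
    Finset.sum_nonneg (fun i _ => (hMrcpos i).le)
  refine ⟨1 + ∑ rc : Fin q1 × Fin q2, Mrc rc, by linarith, fun n hn => ?_⟩
  set M := 1 + ∑ rc : Fin q1 × Fin q2, Mrc rc with hMdef
  have hMrcle : ∀ rc : Fin q1 × Fin q2, Mrc rc ≤ M := by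
    intro rc
    have h1 : Mrc rc ≤ ∑ rc' : Fin q1 × Fin q2, Mrc rc' :=
      Finset.single_le_sum (fun i _ => (hMrcpos i).le) (Finset.mem_univ rc)
    rw [hMdef]; linarith
  have hnpos : (0:ℝ) < n := by exact_mod_cast hn
  have hspos : (0:ℝ) < (n:ℝ) ^ (-(1:ℝ)/2) := Real.rpow_pos_of_pos hnpos _
  have hsubset : {ω | M * ((n:ℝ) ^ (-(1:ℝ)/2)) <
          ‖(n:ℝ)⁻¹ • (∑ i ∈ Finset.range n, F (X i ω)) - μM‖}
      ⊆ ⋃ rc ∈ (Finset.univ : Finset (Fin q1 × Fin q2)),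
          {ω | Mrc rc * ((n:ℝ) ^ (-(1:ℝ)/2)) <
            |(n:ℝ)⁻¹ * (∑ i ∈ Finset.range n, F (X i ω) rc.1 rc.2)
              - ∫ ω', F (X 0 ω') rc.1 rc.2 ∂P|} := by
    intro ω hω
    simp only [Set.mem_setOf_eq] at hω
    have hMpos : 0 < M := by rw [hMdef]; linarith
    have : ¬ (‖(n:ℝ)⁻¹ • (∑ i ∈ Finset.range n, F (X i ω)) - μM‖ ≤
        M * ((n:ℝ) ^ (-(1:ℝ)/2))) := not_le.mpr hω
    rw [Matrix.norm_le_iff (by positivity : (0:ℝ) ≤ M * ((n:ℝ) ^ (-(1:ℝ)/2)))] at this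
    push_neg at this
    obtain ⟨r, c, hrc⟩ := this
    have hentry : ((n:ℝ)⁻¹ • (∑ i ∈ Finset.range n, F (X i ω)) - μM) r c
        = (n:ℝ)⁻¹ * (∑ i ∈ Finset.range n, F (X i ω) r c) - μM r c := by
      simp [Matrix.sub_apply, Matrix.sum_apply]
    rw [hentry, Real.norm_eq_abs] at hrc
    refine Set.mem_biUnion (Finset.mem_univ (r, c)) ?_
    simp only [Set.mem_setOf_eq]
    rw [← hμM]
    calc Mrc (r, c) * ((n:ℝ) ^ (-(1:ℝ)/2)) ≤ M * ((n:ℝ) ^ (-(1:ℝ)/2)) :=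
          mul_le_mul_of_nonneg_right (hMrcle _) hspos.le
      _ < _ := hrc
  calc P _ ≤ ∑ rc : Fin q1 × Fin q2, P {ω | Mrc rc * ((n:ℝ) ^ (-(1:ℝ)/2)) <
          |(n:ℝ)⁻¹ * (∑ i ∈ Finset.range n, F (X i ω) rc.1 rc.2)
            - ∫ ω', F (X 0 ω') rc.1 rc.2 ∂P|} :=
        (measure_mono hsubset).trans (measure_biUnion_finset_le _ _)
    _ ≤ ∑ _rc : Fin q1 × Fin q2, ENNReal.ofReal (e / (q1 * q2 + 1)) :=
        Finset.sum_le_sum (fun rc _ => (hMrc rc n hn).le)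
    _ = (q1 * q2 : ℕ) * ENNReal.ofReal (e / (q1 * q2 + 1)) := by
        simp [Finset.card_univ, mul_comm]
    _ = ENNReal.ofReal ((q1 * q2 : ℕ) * (e / (q1 * q2 + 1))) := by
        rw [ENNReal.ofReal_mul (by positivity), ENNReal.ofReal_natCast]
    _ < ENNReal.ofReal e := by
        rw [ENNReal.ofReal_lt_ofReal_iff he]
        rw [div_eq_inv_mul, ← mul_assoc]
        have h1 : ((q1 * q2 : ℕ) : ℝ) * ((q1 * q2 : ℝ) + 1)⁻¹ < 1 := by
          rw [Nat.cast_mul]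
          rw [mul_inv_lt_iff₀ (by positivity), one_mul]
          nlinarith
        nlinarith

lemma det_core {q k : ℕ}
    (Ωm : Matrix (Fin q) (Fin q) ℝ) (hΩ : IsUnit Ωm.det)
    (dΩ : Fin k → Matrix (Fin q) (Fin q) ℝ)
    (A Bm : Matrix (Fin q) (Fin q) ℝ) (hA : IsUnit A.det) (hB : IsUnit Bm.det)
    (δ : Fin k → ℝ) (T : Fin k → Matrix (Fin q) (Fin q) ℝ)
    (V : Matrix (Fin q) (Fin q) ℝ)
    (hAB : A = Bm + (∑ j, δ j • (dΩ j + T j)) + V)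
    (s : ℝ) (hs : 0 < s) (hs1 : s ≤ 1)
    (M1 M2 M3 K4 : ℝ) (hM1 : 0 ≤ M1) (hM2 : 0 ≤ M2) (hM3 : 0 ≤ M3) (hK4 : 0 ≤ K4)
    (hδ : ∀ j, |δ j| ≤ M1 * s) (hBΩ : ‖Bm - Ωm‖ ≤ M2 * s)
    (hT : ∀ j, ‖T j‖ ≤ M3 * s) (hV : ‖V‖ ≤ K4 * s ^ 2)
    (hsmall : (q:ℝ)^2 * ‖Ωm⁻¹‖ *
      ((M2 + (M1 * (∑ j, ‖dΩ j‖) + k * (M1 * M3) + K4)) * s) ≤ 1/2) :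
    ‖A⁻¹ - Bm⁻¹ + Ωm⁻¹ * (∑ j, δ j • dΩ j) * Ωm⁻¹‖ ≤
      ((q:ℝ)^2 * (4 * ‖Ωm⁻¹‖^2 * (k * (M1 * M3) + K4)
        + 4 * (q:ℝ)^2 * ‖Ωm⁻¹‖^3
            * (M2 + (M1 * (∑ j, ‖dΩ j‖) + k * (M1 * M3) + K4)) * (M1 * (∑ j, ‖dΩ j‖))
        + 2 * (q:ℝ)^2 * ‖Ωm⁻¹‖^3 * (M1 * (∑ j, ‖dΩ j‖)) * M2)) * s^2 := by
  have hN : (0:ℝ) ≤ ‖Ωm⁻¹‖ := norm_nonneg _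
  have hCd : (0:ℝ) ≤ ∑ j, ‖dΩ j‖ := Finset.sum_nonneg fun j _ => norm_nonneg _
  set N := ‖Ωm⁻¹‖ with hNdef
  set Cd := ∑ j, ‖dΩ j‖ with hCddef
  set S := ∑ j, δ j • dΩ j with hSdef
  set C2 := M1 * Cd + k * (M1 * M3) + K4 with hC2def
  have hkMM : (0:ℝ) ≤ k * (M1 * M3) + K4 :=
    add_nonneg (mul_nonneg (Nat.cast_nonneg k) (mul_nonneg hM1 hM3)) hK4
  have hM1Cd : (0:ℝ) ≤ M1 * Cd := mul_nonneg hM1 hCd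
  have h2N : (0:ℝ) ≤ 2 * N := by linarith
  have hC2 : 0 ≤ C2 := by
    rw [hC2def]; linarith
  -- bound on S
  have hS : ‖S‖ ≤ M1 * Cd * s := by
    calc ‖S‖ ≤ ∑ j, ‖δ j • dΩ j‖ := norm_sum_le _ _
      _ ≤ ∑ j, (M1 * s) * ‖dΩ j‖ := by
          refine Finset.sum_le_sum fun j _ => ?_
          rw [norm_smul, Real.norm_eq_abs]
          exact mul_le_mul_of_nonneg_right (hδ j) (norm_nonneg _)
      _ = M1 * Cd * s := by rw [hCddef, ← Finset.mul_sum]; ring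
  -- decomposition of A - Bm - S
  have hdec : (A - Bm) - S = (∑ j, δ j • T j) + V := by
    rw [hAB, hSdef]
    have : (∑ j, δ j • (dΩ j + T j)) = (∑ j, δ j • dΩ j) + ∑ j, δ j • T j := by
      rw [← Finset.sum_add_distrib]
      exact Finset.sum_congr rfl fun j _ => smul_add _ _ _
    rw [this]; abel
  have hDS : ‖(A - Bm) - S‖ ≤ (k * (M1 * M3) + K4) * s^2 := by
    rw [hdec]
    calc ‖(∑ j, δ j • T j) + V‖ ≤ ‖∑ j, δ j • T j‖ + ‖V‖ := norm_add_le _ _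
      _ ≤ (∑ j : Fin k, (M1 * s) * (M3 * s)) + K4 * s^2 := by
          refine add_le_add ?_ hV
          calc ‖∑ j, δ j • T j‖ ≤ ∑ j, ‖δ j • T j‖ := norm_sum_le _ _
            _ ≤ ∑ j : Fin k, (M1 * s) * (M3 * s) := by
                refine Finset.sum_le_sum fun j _ => ?_
                rw [norm_smul, Real.norm_eq_abs]
                exact mul_le_mul (hδ j) (hT j) (norm_nonneg _) (mul_nonneg hM1 hs.le)
      _ = (k * (M1 * M3) + K4) * s^2 := by
          rw [Finset.sum_const, Finset.card_univ, Fintype.card_fin, nsmul_eq_mul]; ring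
  have hD : ‖A - Bm‖ ≤ C2 * s := by
    have h1 : ‖A - Bm‖ ≤ ‖S‖ + ‖(A - Bm) - S‖ := by
      calc ‖A - Bm‖ = ‖S + ((A - Bm) - S)‖ := by congr 1; abel
        _ ≤ _ := norm_add_le _ _
    have h2 : (k * (M1 * M3) + K4) * s^2 ≤ (k * (M1 * M3) + K4) * s := by
      have hss : s^2 ≤ s := by nlinarith
      exact mul_le_mul_of_nonneg_left hss hkMM
    rw [hC2def]
    calc ‖A - Bm‖ ≤ M1 * Cd * s + (k * (M1 * M3) + K4) * s^2 :=
          h1.trans (add_le_add hS hDS)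
      _ ≤ M1 * Cd * s + (k * (M1 * M3) + K4) * s := by linarith
      _ = (M1 * Cd + k * (M1 * M3) + K4) * s := by ring
  have hAΩ : ‖A - Ωm‖ ≤ (M2 + C2) * s := by
    calc ‖A - Ωm‖ = ‖(A - Bm) + (Bm - Ωm)‖ := by congr 1; abel
      _ ≤ ‖A - Bm‖ + ‖Bm - Ωm‖ := norm_add_le _ _
      _ ≤ C2 * s + M2 * s := add_le_add hD hBΩ
      _ = (M2 + C2) * s := by ring
  have hsmallB : (q:ℝ)^2 * N * ‖Bm - Ωm‖ ≤ 1/2 := by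
    refine le_trans ?_ hsmall
    rw [mul_assoc, mul_assoc]
    refine mul_le_mul_of_nonneg_left ?_ (by positivity)
    refine mul_le_mul_of_nonneg_left ?_ hN
    refine hBΩ.trans ?_
    have : M2 ≤ M2 + C2 := by linarith
    exact mul_le_mul_of_nonneg_right this hs.le
  have hsmallA : (q:ℝ)^2 * N * ‖A - Ωm‖ ≤ 1/2 := by
    refine le_trans ?_ hsmall
    rw [mul_assoc, mul_assoc]
    refine mul_le_mul_of_nonneg_left ?_ (by positivity)
    exact mul_le_mul_of_nonneg_left hAΩ hN
  obtain ⟨hBinv, hBdiff⟩ := inv_pert Ωm Bm hΩ hB hsmallB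
  obtain ⟨hAinv, hAdiff⟩ := inv_pert Ωm A hΩ hA hsmallA
  have hAdiff' : ‖A⁻¹ - Ωm⁻¹‖ ≤ 2 * (q:ℝ)^2 * N^2 * ((M2 + C2) * s) :=
    hAdiff.trans (mul_le_mul_of_nonneg_left hAΩ (by positivity))
  have hBdiff' : ‖Bm⁻¹ - Ωm⁻¹‖ ≤ 2 * (q:ℝ)^2 * N^2 * (M2 * s) :=
    hBdiff.trans (mul_le_mul_of_nonneg_left hBΩ (by positivity))
  rw [key_identity A Bm Ωm⁻¹ S hA hB]
  have t1 : ‖A⁻¹ * ((A - Bm) - S) * Bm⁻¹‖ ≤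
      (q:ℝ)^2 * (2*N) * ((k * (M1 * M3) + K4) * s^2) * (2*N) :=
    mul3_bound _ _ _ hAinv hDS hBinv (mul_nonneg hkMM (sq_nonneg s)) h2N
  have t2 : ‖(A⁻¹ - Ωm⁻¹) * S * Bm⁻¹‖ ≤
      (q:ℝ)^2 * (2 * (q:ℝ)^2 * N^2 * ((M2 + C2) * s)) * (M1 * Cd * s) * (2*N) :=
    mul3_bound _ _ _ hAdiff' hS hBinv (mul_nonneg hM1Cd hs.le) h2N
  have t3 : ‖Ωm⁻¹ * S * (Bm⁻¹ - Ωm⁻¹)‖ ≤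
      (q:ℝ)^2 * N * (M1 * Cd * s) * (2 * (q:ℝ)^2 * N^2 * (M2 * s)) :=
    mul3_bound _ _ _ le_rfl hS hBdiff'  (mul_nonneg hM1Cd hs.le)
      (mul_nonneg (by positivity) (mul_nonneg hM2 hs.le))
  calc ‖-(A⁻¹ * ((A - Bm) - S) * Bm⁻¹) - (A⁻¹ - Ωm⁻¹) * S * Bm⁻¹
        - Ωm⁻¹ * S * (Bm⁻¹ - Ωm⁻¹)‖
      ≤ ‖-(A⁻¹ * ((A - Bm) - S) * Bm⁻¹) - (A⁻¹ - Ωm⁻¹) * S * Bm⁻¹‖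
        + ‖Ωm⁻¹ * S * (Bm⁻¹ - Ωm⁻¹)‖ := norm_sub_le _ _
    _ ≤ ‖-(A⁻¹ * ((A - Bm) - S) * Bm⁻¹)‖ + ‖(A⁻¹ - Ωm⁻¹) * S * Bm⁻¹‖
        + ‖Ωm⁻¹ * S * (Bm⁻¹ - Ωm⁻¹)‖ := by
          have := norm_sub_le (-(A⁻¹ * ((A - Bm) - S) * Bm⁻¹)) ((A⁻¹ - Ωm⁻¹) * S * Bm⁻¹)
          linarith
    _ = ‖A⁻¹ * ((A - Bm) - S) * Bm⁻¹‖ + ‖(A⁻¹ - Ωm⁻¹) * S * Bm⁻¹‖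
        + ‖Ωm⁻¹ * S * (Bm⁻¹ - Ωm⁻¹)‖ := by rw [norm_neg]
    _ ≤ (q:ℝ)^2 * (2*N) * ((k * (M1 * M3) + K4) * s^2) * (2*N)
        + (q:ℝ)^2 * (2 * (q:ℝ)^2 * N^2 * ((M2 + C2) * s)) * (M1 * Cd * s) * (2*N)
        + (q:ℝ)^2 * N * (M1 * Cd * s) * (2 * (q:ℝ)^2 * N^2 * (M2 * s)) := by
          linarith
    _ = ((q:ℝ)^2 * (4 * N^2 * (k * (M1 * M3) + K4)
        + 4 * (q:ℝ)^2 * N^3 * (M2 + C2) * (M1 * Cd)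
        + 2 * (q:ℝ)^2 * N^3 * (M1 * Cd) * M2)) * s^2 := by ring

lemma entry_quad_bound {q k : ℕ} (Bi : Matrix (Fin q) (Fin k) ℝ) (δ : Fin k → ℝ)
    (r c : Fin q) :
    |(Bi *ᵥ δ) r * (Bi *ᵥ δ) c| ≤ (k:ℝ) * ‖δ‖^2 * ∑ r', ∑ c', (Bi r' c')^2 := by
  have hδnn : (0:ℝ) ≤ ‖δ‖ := norm_nonneg _
  have hentry : ∀ r' : Fin q, |(Bi *ᵥ δ) r'| ≤ ‖δ‖ * ∑ j, |Bi r' j| := by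
    intro r'
    calc |(Bi *ᵥ δ) r'| = |∑ j, Bi r' j * δ j| := by simp [Matrix.mulVec, dotProduct]
      _ ≤ ∑ j, |Bi r' j * δ j| := Finset.abs_sum_le_sum_abs _ _
      _ ≤ ∑ j, |Bi r' j| * ‖δ‖ := by
          refine Finset.sum_le_sum fun j _ => ?_
          rw [abs_mul]
          refine mul_le_mul_of_nonneg_left ?_ (abs_nonneg _)
          calc |δ j| = ‖δ j‖ := (Real.norm_eq_abs _).symm
            _ ≤ ‖δ‖ := norm_le_pi_norm δ j
      _ = ‖δ‖ * ∑ j, |Bi r' j| := by rw [← Finset.sum_mul]; ring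
  have hsq : ∀ r' : Fin q, (∑ j, |Bi r' j|)^2 ≤ (k:ℝ) * ∑ r'', ∑ c', (Bi r'' c')^2 := by
    intro r'
    calc (∑ j, |Bi r' j|)^2 ≤ (Finset.univ : Finset (Fin k)).card * ∑ j, |Bi r' j|^2 :=
          sq_sum_le_card_mul_sum_sq
      _ = (k:ℝ) * ∑ j, (Bi r' j)^2 := by simp [sq_abs]
      _ ≤ (k:ℝ) * ∑ r'', ∑ c', (Bi r'' c')^2 := by
          refine mul_le_mul_of_nonneg_left ?_ (Nat.cast_nonneg k)
          exact Finset.single_le_sum (f := fun r'' => ∑ c', (Bi r'' c')^2)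
            (fun i _ => Finset.sum_nonneg fun j _ => sq_nonneg _) (Finset.mem_univ r')
  set H := ∑ r', ∑ c', (Bi r' c')^2 with hH
  have hHnn : 0 ≤ H := Finset.sum_nonneg fun i _ => Finset.sum_nonneg fun j _ => sq_nonneg _
  rw [abs_mul]
  have h1 := hentry r
  have h2 := hentry c
  have h3 := hsq r
  have h4 := hsq c
  have hpr : 0 ≤ ∑ j, |Bi r j| := Finset.sum_nonneg fun j _ => abs_nonneg _
  have hpc : 0 ≤ ∑ j, |Bi c j| := Finset.sum_nonneg fun j _ => abs_nonneg _
  have key : |(Bi *ᵥ δ) r| * |(Bi *ᵥ δ) c| ≤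
      ‖δ‖^2 * ((∑ j, |Bi r j|) * (∑ j, |Bi c j|)) := by
    calc |(Bi *ᵥ δ) r| * |(Bi *ᵥ δ) c| ≤ (‖δ‖ * ∑ j, |Bi r j|) * (‖δ‖ * ∑ j, |Bi c j|) :=
        mul_le_mul h1 h2 (abs_nonneg _) (by positivity)
      _ = ‖δ‖^2 * ((∑ j, |Bi r j|) * (∑ j, |Bi c j|)) := by ring
  refine key.trans ?_
  have hAMGM : (∑ j, |Bi r j|) * (∑ j, |Bi c j|) ≤ (k:ℝ) * H := by
    nlinarith [sq_nonneg ((∑ j, |Bi r j|) - (∑ j, |Bi c j|))]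
  calc ‖δ‖^2 * ((∑ j, |Bi r j|) * (∑ j, |Bi c j|)) ≤ ‖δ‖^2 * ((k:ℝ) * H) :=
        mul_le_mul_of_nonneg_left hAMGM (by positivity)
    _ = (k:ℝ) * ‖δ‖^2 * H := by ring

lemma vq_bound {q k : ℕ} (n : ℕ) (Bi : ℕ → Matrix (Fin q) (Fin k) ℝ) (δ : Fin k → ℝ) :
    ‖(n:ℝ)⁻¹ • ∑ i ∈ Finset.range n, vecMulVec (Bi i *ᵥ δ) (Bi i *ᵥ δ)‖ ≤
      (k:ℝ) * ‖δ‖^2 * ((n:ℝ)⁻¹ * ∑ i ∈ Finset.range n, ∑ r', ∑ c', (Bi i r' c')^2) := by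
  have hnn : (0:ℝ) ≤ (k:ℝ) * ‖δ‖^2 *
      ((n:ℝ)⁻¹ * ∑ i ∈ Finset.range n, ∑ r', ∑ c', (Bi i r' c')^2) := by
    have : (0:ℝ) ≤ ∑ i ∈ Finset.range n, ∑ r', ∑ c', (Bi i r' c')^2 :=
      Finset.sum_nonneg fun i _ => Finset.sum_nonneg fun r _ =>
        Finset.sum_nonneg fun c _ => sq_nonneg _
    positivity
  rw [Matrix.norm_le_iff hnn]
  intro r c
  have hentry : ((n:ℝ)⁻¹ • ∑ i ∈ Finset.range n, vecMulVec (Bi i *ᵥ δ) (Bi i *ᵥ δ)) r c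
      = (n:ℝ)⁻¹ * ∑ i ∈ Finset.range n, (Bi i *ᵥ δ) r * (Bi i *ᵥ δ) c := by
    simp [Matrix.sum_apply, Matrix.vecMulVec_apply]
  rw [hentry, Real.norm_eq_abs, abs_mul, abs_inv, Nat.abs_cast]
  calc (n:ℝ)⁻¹ * |∑ i ∈ Finset.range n, (Bi i *ᵥ δ) r * (Bi i *ᵥ δ) c|
      ≤ (n:ℝ)⁻¹ * ∑ i ∈ Finset.range n, |(Bi i *ᵥ δ) r * (Bi i *ᵥ δ) c| :=
        mul_le_mul_of_nonneg_left (Finset.abs_sum_le_sum_abs _ _) (by positivity)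
    _ ≤ (n:ℝ)⁻¹ * ∑ i ∈ Finset.range n, (k:ℝ) * ‖δ‖^2 * ∑ r', ∑ c', (Bi i r' c')^2 :=
        mul_le_mul_of_nonneg_left
          (Finset.sum_le_sum fun i _ => entry_quad_bound (Bi i) δ r c) (by positivity)
    _ = (k:ℝ) * ‖δ‖^2 * ((n:ℝ)⁻¹ * ∑ i ∈ Finset.range n, ∑ r', ∑ c', (Bi i r' c')^2) := by
        rw [← Finset.mul_sum]; ring

lemma decomp {q k : ℕ} (n : ℕ) (u : ℕ → Fin q → ℝ) (Bi : ℕ → Matrix (Fin q) (Fin k) ℝ)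
    (δ : Fin k → ℝ) :
    (n:ℝ)⁻¹ • ∑ i ∈ Finset.range n, vecMulVec (u i + Bi i *ᵥ δ) (u i + Bi i *ᵥ δ)
      = ((n:ℝ)⁻¹ • ∑ i ∈ Finset.range n, vecMulVec (u i) (u i))
        + (∑ j, δ j • ((n:ℝ)⁻¹ • ∑ i ∈ Finset.range n,
            (vecMulVec (u i) (fun r => Bi i r j) + vecMulVec (fun r => Bi i r j) (u i))))
        + ((n:ℝ)⁻¹ • ∑ i ∈ Finset.range n, vecMulVec (Bi i *ᵥ δ) (Bi i *ᵥ δ)) := by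
  have hi : ∀ i, vecMulVec (u i + Bi i *ᵥ δ) (u i + Bi i *ᵥ δ)
      = vecMulVec (u i) (u i)
        + (∑ j, δ j • (vecMulVec (u i) (fun r => Bi i r j) + vecMulVec (fun r => Bi i r j) (u i)))
        + vecMulVec (Bi i *ᵥ δ) (Bi i *ᵥ δ) := by
    intro i
    ext r c
    have hv : ∀ r' : Fin q, (Bi i *ᵥ δ) r' = ∑ j, Bi i r' j * δ j := by
      intro r'; simp [Matrix.mulVec, dotProduct]
    simp only [Matrix.vecMulVec_apply, Matrix.add_apply, Matrix.sum_apply,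
      Matrix.smul_apply, smul_eq_mul, Pi.add_apply]
    rw [hv r, hv c]
    have key : (u i r) * (∑ j, Bi i c j * δ j) + (∑ j, Bi i r j * δ j) * (u i c)
        = ∑ j, δ j * (u i r * Bi i c j + Bi i r j * u i c) := by
      rw [Finset.mul_sum, Finset.sum_mul, ← Finset.sum_add_distrib]
      exact Finset.sum_congr rfl fun j _ => by ring
    have expand : (u i r + ∑ j, Bi i r j * δ j) * (u i c + ∑ j, Bi i c j * δ j)
        = u i r * u i c + ((u i r) * (∑ j, Bi i c j * δ j) + (∑ j, Bi i r j * δ j) * (u i c))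
          + (∑ j, Bi i r j * δ j) * (∑ j, Bi i c j * δ j) := by ring
    rw [expand, key]
  rw [Finset.sum_congr rfl fun i _ => hi i]
  rw [Finset.sum_add_distrib, Finset.sum_add_distrib, smul_add, smul_add]
  congr 1
  congr 1
  rw [Finset.sum_comm]
  rw [Finset.smul_sum]
  refine Finset.sum_congr rfl fun j _ => ?_
  rw [← Finset.smul_sum, smul_smul, smul_smul, mul_comm]

end InvWAux

/-- **Expansion of the inverse estimated weight matrix around the true value.**
For a linear moment function with i.i.d. data, finite fourth moments, `Ω = Ω(θ₀)`
nonsingular, `Ω_n(θ₀)` and `Ω_n(θ̂₁)` invertible with probability approaching one, and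
`θ̂₁ − θ₀ = O_p(n^{−1/2})`,
`[Ω_n(θ̂₁)]⁻¹ = [Ω_n(θ₀)]⁻¹
  − n^{−1/2} Ω⁻¹ (∑_j (∂Ω(θ₀)/∂θ_j) √n(θ̂_{1,j} − θ_{0,j})) Ω⁻¹ + O_p(n⁻¹)`. -/
theorem inverse_estimated_weight_matrix_expansion
    {Ωs : Type*} [MeasurableSpace Ωs] (P : Measure Ωs) [IsProbabilityMeasure P]
    {dx q k : ℕ}
    -- the i.i.d. observations
    (X : ℕ → Ωs → (Fin dx → ℝ)) (hXmeas : ∀ i, Measurable (X i))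
    (hindep : iIndepFun X P)
    (hident : ∀ i : ℕ, IdentDistrib (X i) (X 0) P P)
    -- the linear moment function and its Jacobian
    (a : (Fin dx → ℝ) → (Fin q → ℝ)) (ha : Measurable a)
    (B : (Fin dx → ℝ) → Matrix (Fin q) (Fin k) ℝ)
    (hB : ∀ r c, Measurable fun x => B x r c)
    (g : (Fin dx → ℝ) → (Fin k → ℝ) → (Fin q → ℝ))
    (hg : ∀ x θ, g x θ = a x + B x *ᵥ θ)
    -- a fixed parameter value `θ₀`
    (θ0 : Fin k → ℝ)
    -- fourth moments
    (hmom_g : Integrable (fun ω => ‖g (X 0 ω) θ0‖ ^ 4) P)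
    (hmom_G : Integrable (fun ω => ‖B (X 0 ω)‖ ^ 4) P)
    -- population quantities
    (Ωm : Matrix (Fin q) (Fin q) ℝ)
    (hΩm : ∀ r c, Ωm r c = ∫ ω, g (X 0 ω) θ0 r * g (X 0 ω) θ0 c ∂P)
    (hΩunit : IsUnit Ωm.det)
    (dΩ : Fin k → Matrix (Fin q) (Fin q) ℝ)
    (hdΩ : ∀ (j : Fin k) (r c : Fin q), dΩ j r c =
      ∫ ω, (g (X 0 ω) θ0 r * B (X 0 ω) c j + B (X 0 ω) r j * g (X 0 ω) θ0 c) ∂P)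
    -- sample second-moment matrices
    (Ωn : ℕ → (Fin k → ℝ) → Ωs → Matrix (Fin q) (Fin q) ℝ)
    (hΩn : ∀ n θ ω, Ωn n θ ω =
      (n : ℝ)⁻¹ • ∑ i ∈ Finset.range n, vecMulVec (g (X i ω) θ) (g (X i ω) θ))
    -- `Ω_n(θ₀)` and `Ω_n(θ̂₁)` invertible with probability approaching one
    (θh1 : ℕ → Ωs → (Fin k → ℝ)) (hθh1meas : ∀ n, Measurable (θh1 n))
    (hΩn0inv : Tendsto (fun n => P {ω | ¬ IsUnit (Ωn n θ0 ω).det}) atTop (nhds 0))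
    (hΩnhinv : Tendsto (fun n => P {ω | ¬ IsUnit (Ωn n (θh1 n ω) ω).det})
      atTop (nhds 0))
    -- `θ̂₁ − θ₀ = O_p(n^{−1/2})`
    (hθh1rate : IsBigOp P (fun n ω => θh1 n ω - θ0)
      (fun n => (n : ℝ) ^ (-(1 : ℝ) / 2))) :
    -- conclusion: the remainder of the expansion is `O_p(n⁻¹)`
    IsBigOp P
      (fun n ω =>
        (Ωn n (θh1 n ω) ω)⁻¹ - (Ωn n θ0 ω)⁻¹
          + (Real.sqrt n)⁻¹ •
              (Ωm⁻¹
                * (∑ j : Fin k,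
                    (Real.sqrt n * (θh1 n ω j - θ0 j)) • dΩ j)
                * Ωm⁻¹))
      (fun n => (n : ℝ)⁻¹) := by
  classical
  have hgmeas : ∀ r, Measurable fun x => g x θ0 r := by
    intro r
    have hrw : (fun x => g x θ0 r) = fun x => a x r + ∑ j, B x r j * θ0 j := by
      funext x; rw [hg]; simp [Matrix.mulVec, dotProduct]
    rw [hrw]
    exact ((measurable_pi_apply r).comp ha).add
      (Finset.measurable_sum _ fun j _ => (hB r j).mul_const _)
  rcases Nat.eq_zero_or_pos q with hq0 | hqpos
  · -- trivial case: `q = 0`, all matrices are zero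
    subst hq0
    intro ε hε
    refine ⟨1, one_pos, ?_⟩
    filter_upwards with n
    have hset : {ω | (1:ℝ) < ‖(Ωn n (θh1 n ω) ω)⁻¹ - (Ωn n θ0 ω)⁻¹
          + (Real.sqrt n)⁻¹ • (Ωm⁻¹ * (∑ j : Fin k,
              (Real.sqrt n * (θh1 n ω j - θ0 j)) • dΩ j) * Ωm⁻¹)‖ / (n:ℝ)⁻¹} = ∅ := by
      apply Set.eq_empty_iff_forall_notMem.mpr
      intro ω hω
      simp only [Set.mem_setOf_eq] at hω
      have hzero : (Ωn n (θh1 n ω) ω)⁻¹ - (Ωn n θ0 ω)⁻¹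
          + (Real.sqrt n)⁻¹ • (Ωm⁻¹ * (∑ j : Fin k,
              (Real.sqrt n * (θh1 n ω j - θ0 j)) • dΩ j) * Ωm⁻¹) = 0 :=
        Subsingleton.elim _ _
      rw [hzero, norm_zero, zero_div] at hω
      linarith
    show P {ω | (1:ℝ) < ‖(Ωn n (θh1 n ω) ω)⁻¹ - (Ωn n θ0 ω)⁻¹
          + (Real.sqrt n)⁻¹ • (Ωm⁻¹ * (∑ j : Fin k,
              (Real.sqrt n * (θh1 n ω j - θ0 j)) • dΩ j) * Ωm⁻¹)‖ / (n:ℝ)⁻¹}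
        < ENNReal.ofReal ε
    rw [hset, measure_empty]
    exact ENNReal.ofReal_pos.mpr hε
  -- main case `0 < q`
  intro ε hε
  -- elementary square estimates
  have hsq_le : ∀ {x G : ℝ}, |x| ≤ G → x^2 ≤ G^2 := by
    intro x G h
    rw [← sq_abs]
    exact pow_le_pow_left₀ (abs_nonneg x) h 2
  have habs_g : ∀ (ω : Ωs) (i : ℕ) (r : Fin q), |g (X i ω) θ0 r| ≤ ‖g (X i ω) θ0‖ := by
    intro ω i r; rw [← Real.norm_eq_abs]; exact norm_le_pi_norm _ r
  have habs_B : ∀ (ω : Ωs) (i : ℕ) (r : Fin q) (c : Fin k),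
      |B (X i ω) r c| ≤ ‖B (X i ω)‖ := by
    intro ω i r c; rw [← Real.norm_eq_abs]
    exact Matrix.norm_entry_le_entrywise_sup_norm _
  -- second moments of the entries of `g g'`
  have hgg_meas : ∀ r c : Fin q, Measurable fun ω => g (X 0 ω) θ0 r * g (X 0 ω) θ0 c :=
    fun r c => ((hgmeas r).comp (hXmeas 0)).mul ((hgmeas c).comp (hXmeas 0))
  have hgg_mem : ∀ r c : Fin q, MemLp (fun ω => g (X 0 ω) θ0 r * g (X 0 ω) θ0 c) 2 P := by
    intro r c
    rw [memLp_two_iff_integrable_sq (hgg_meas r c).aestronglyMeasurable]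
    refine hmom_g.mono' (((hgg_meas r c).pow_const 2).aestronglyMeasurable)
      (ae_of_all _ fun ω => ?_)
    have e1 : (g (X 0 ω) θ0 r)^2 ≤ ‖g (X 0 ω) θ0‖^2 := hsq_le (habs_g ω 0 r)
    have e2 : (g (X 0 ω) θ0 c)^2 ≤ ‖g (X 0 ω) θ0‖^2 := hsq_le (habs_g ω 0 c)
    rw [Real.norm_eq_abs, abs_of_nonneg (sq_nonneg _)]
    nlinarith [sq_nonneg (g (X 0 ω) θ0 r), sq_nonneg (g (X 0 ω) θ0 c),
      norm_nonneg (g (X 0 ω) θ0)]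
  -- second moments of the mixed entries
  have hmix_meas : ∀ (j : Fin k) (r c : Fin q), Measurable fun x =>
      g x θ0 r * B x c j + B x r j * g x θ0 c := fun j r c =>
    ((hgmeas r).mul (hB c j)).add ((hB r j).mul (hgmeas c))
  have hmix_mem : ∀ (j : Fin k) (r c : Fin q), MemLp (fun ω =>
      g (X 0 ω) θ0 r * B (X 0 ω) c j + B (X 0 ω) r j * g (X 0 ω) θ0 c) 2 P := by
    intro j r c
    have hm : Measurable fun ω =>
        g (X 0 ω) θ0 r * B (X 0 ω) c j + B (X 0 ω) r j * g (X 0 ω) θ0 c :=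
      (hmix_meas j r c).comp (hXmeas 0)
    rw [memLp_two_iff_integrable_sq hm.aestronglyMeasurable]
    have hbnd : Integrable (fun ω => 2 * (‖g (X 0 ω) θ0‖^4 + ‖B (X 0 ω)‖^4)) P := by
      have h4 : Integrable (fun ω => ‖g (X 0 ω) θ0‖ ^ 4 + ‖B (X 0 ω)‖ ^ 4) P :=
        hmom_g.add hmom_G
      simpa [mul_comm] using h4.const_mul 2
    refine hbnd.mono' ((hm.pow_const 2).aestronglyMeasurable) (ae_of_all _ fun ω => ?_)
    have e1 : (g (X 0 ω) θ0 r)^2 ≤ ‖g (X 0 ω) θ0‖^2 := hsq_le (habs_g ω 0 r)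
    have e2 : (g (X 0 ω) θ0 c)^2 ≤ ‖g (X 0 ω) θ0‖^2 := hsq_le (habs_g ω 0 c)
    have e3 : (B (X 0 ω) c j)^2 ≤ ‖B (X 0 ω)‖^2 := hsq_le (habs_B ω 0 c j)
    have e4 : (B (X 0 ω) r j)^2 ≤ ‖B (X 0 ω)‖^2 := hsq_le (habs_B ω 0 r j)
    have p1 : (g (X 0 ω) θ0 r)^2 * (B (X 0 ω) c j)^2 ≤ ‖g (X 0 ω) θ0‖^2 * ‖B (X 0 ω)‖^2 :=
      mul_le_mul e1 e3 (sq_nonneg _) (sq_nonneg _)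
    have p2 : (B (X 0 ω) r j)^2 * (g (X 0 ω) θ0 c)^2 ≤ ‖B (X 0 ω)‖^2 * ‖g (X 0 ω) θ0‖^2 :=
      mul_le_mul e4 e2 (sq_nonneg _) (sq_nonneg _)
    rw [Real.norm_eq_abs, abs_of_nonneg (sq_nonneg _)]
    nlinarith [sq_nonneg (g (X 0 ω) θ0 r * B (X 0 ω) c j - B (X 0 ω) r j * g (X 0 ω) θ0 c),
      sq_nonneg (‖g (X 0 ω) θ0‖^2 - ‖B (X 0 ω)‖^2)]
  -- second moment of the sum of squared entries of `B`
  have hh4_measx : Measurable fun x => ∑ r' : Fin q, ∑ c' : Fin k, (B x r' c')^2 :=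
    Finset.measurable_sum _ fun r _ => Finset.measurable_sum _ fun c _ => (hB r c).pow_const 2
  have hh4_mem : MemLp (fun ω => ∑ r' : Fin q, ∑ c' : Fin k, (B (X 0 ω) r' c')^2) 2 P := by
    have hm : Measurable fun ω => ∑ r' : Fin q, ∑ c' : Fin k, (B (X 0 ω) r' c')^2 :=
      hh4_measx.comp (hXmeas 0)
    rw [memLp_two_iff_integrable_sq hm.aestronglyMeasurable]
    have hbnd : Integrable (fun ω => ((q*k : ℕ):ℝ)^2 * ‖B (X 0 ω)‖^4) P := by
      simpa [mul_comm] using hmom_G.const_mul (((q*k : ℕ):ℝ)^2)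
    refine hbnd.mono' ((hm.pow_const 2).aestronglyMeasurable) (ae_of_all _ fun ω => ?_)
    have hub : ∑ r' : Fin q, ∑ c' : Fin k, (B (X 0 ω) r' c')^2
        ≤ ((q*k : ℕ):ℝ) * ‖B (X 0 ω)‖^2 := by
      calc ∑ r' : Fin q, ∑ c' : Fin k, (B (X 0 ω) r' c')^2
          ≤ ∑ _r' : Fin q, ∑ _c' : Fin k, ‖B (X 0 ω)‖^2 :=
            Finset.sum_le_sum fun r _ => Finset.sum_le_sum fun c _ => hsq_le (habs_B ω 0 r c)
        _ = ((q*k : ℕ):ℝ) * ‖B (X 0 ω)‖^2 := by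
            simp only [Finset.sum_const, Finset.card_univ, Fintype.card_fin, nsmul_eq_mul]
            push_cast; ring
    have hnn : (0:ℝ) ≤ ∑ r' : Fin q, ∑ c' : Fin k, (B (X 0 ω) r' c')^2 := by positivity
    rw [Real.norm_eq_abs, abs_of_nonneg (sq_nonneg _)]
    calc (∑ r' : Fin q, ∑ c' : Fin k, (B (X 0 ω) r' c')^2)^2
        ≤ (((q*k : ℕ):ℝ) * ‖B (X 0 ω)‖^2)^2 := pow_le_pow_left₀ hnn hub 2
      _ = ((q*k : ℕ):ℝ)^2 * ‖B (X 0 ω)‖^4 := by ring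
  -- population means match
  have hμ0 : ∀ r c : Fin q, Ωm r c =
      ∫ ω', (fun x => vecMulVec (g x θ0) (g x θ0)) (X 0 ω') r c ∂P := fun r c => hΩm r c
  have hμj : ∀ (j : Fin k) (r c : Fin q), dΩ j r c =
      ∫ ω', (fun x => vecMulVec (g x θ0) (fun r' => B x r' j)
        + vecMulVec (fun r' => B x r' j) (g x θ0)) (X 0 ω') r c ∂P := fun j r c => hdΩ j r c
  -- probabilistic bounds
  have hc6 : (0:ℝ) < ε/6 := by positivity
  have hc6' : (0:ℝ) < ε/(6*(k+1)) := by positivity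
  obtain ⟨M1, hM1pos, hE1⟩ := hθh1rate (ε/6) hc6
  obtain ⟨M2, hM2pos, hE2⟩ := InvWAux.sample_mean_cheb_matrix hindep hident
    (fun x => vecMulVec (g x θ0) (g x θ0))
    (fun r c => (hgmeas r).mul (hgmeas c))
    (fun r c => hgg_mem r c) Ωm hμ0 hc6
  choose M3 hM3pos hE3 using fun j : Fin k => InvWAux.sample_mean_cheb_matrix hindep hident
    (fun x => vecMulVec (g x θ0) (fun r' => B x r' j) + vecMulVec (fun r' => B x r' j) (g x θ0))
    (fun r c => hmix_meas j r c) (fun r c => hmix_mem j r c) (dΩ j) (hμj j) hc6'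
  obtain ⟨M4, hM4pos, hE4⟩ := InvWAux.sample_mean_cheb hindep hident
    (fun x => ∑ r' : Fin q, ∑ c' : Fin k, (B x r' c')^2) hh4_measx hh4_mem hc6
  -- fixed constants
  have hμ4nn : (0:ℝ) ≤ ∫ ω', (∑ r' : Fin q, ∑ c' : Fin k, (B (X 0 ω') r' c')^2) ∂P :=
    integral_nonneg fun ω' => by positivity
  set μ4 := ∫ ω', (∑ r' : Fin q, ∑ c' : Fin k, (B (X 0 ω') r' c')^2) ∂P with hμ4_def
  set M3m := 1 + ∑ j : Fin k, M3 j with hM3m_def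
  have hM3msum : 0 ≤ ∑ j : Fin k, M3 j := Finset.sum_nonneg fun j _ => (hM3pos j).le
  have hM3mpos : 0 < M3m := by rw [hM3m_def]; linarith
  have hM3le : ∀ j, M3 j ≤ M3m := by
    intro j
    have := Finset.single_le_sum (f := M3) (fun j _ => (hM3pos j).le) (Finset.mem_univ j)
    rw [hM3m_def]; linarith
  set K4 := (k:ℝ) * M1^2 * (μ4 + M4) with hK4_def
  have hμ4M4 : (0:ℝ) ≤ μ4 + M4 := by linarith
  have hK4nn : 0 ≤ K4 := by
    rw [hK4_def]
    exact mul_nonneg (mul_nonneg (Nat.cast_nonneg k) (sq_nonneg M1)) hμ4M4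
  refine ⟨|(q:ℝ)^2 * (4 * ‖Ωm⁻¹‖^2 * ((k:ℝ) * (M1 * M3m) + K4)
      + 4 * (q:ℝ)^2 * ‖Ωm⁻¹‖^3
          * (M2 + (M1 * (∑ j, ‖dΩ j‖) + (k:ℝ) * (M1 * M3m) + K4)) * (M1 * (∑ j, ‖dΩ j‖))
      + 2 * (q:ℝ)^2 * ‖Ωm⁻¹‖^3 * (M1 * (∑ j, ‖dΩ j‖)) * M2)| + 1, by positivity, ?_⟩
  -- eventual statements
  have hIA := hΩnhinv.eventually_lt_const (ENNReal.ofReal_pos.mpr hc6)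
  have hIB := hΩn0inv.eventually_lt_const (ENNReal.ofReal_pos.mpr hc6)
  have hstend : Tendsto (fun n : ℕ => (n:ℝ) ^ (-(1:ℝ)/2)) atTop (nhds 0) := by
    have h := (tendsto_rpow_neg_atTop (y := (1:ℝ)/2) (by norm_num)).comp
      tendsto_natCast_atTop_atTop (α := ℕ)
    simpa [Function.comp_def, neg_div] using h
  have hsm : ∀ᶠ n : ℕ in atTop, (q:ℝ)^2 * ‖Ωm⁻¹‖ *
      ((M2 + (M1 * (∑ j, ‖dΩ j‖) + (k:ℝ) * (M1 * M3m) + K4)) * ((n:ℝ) ^ (-(1:ℝ)/2)))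
        ≤ 1/2 := by
    have h := Filter.Tendsto.const_mul
      ((q:ℝ)^2 * ‖Ωm⁻¹‖ * (M2 + (M1 * (∑ j, ‖dΩ j‖) + (k:ℝ) * (M1 * M3m) + K4))) hstend
    rw [mul_zero] at h
    have h2 := h.eventually_le_const (show (0:ℝ) < 1/2 by norm_num)
    filter_upwards [h2] with n hn
    calc (q:ℝ)^2 * ‖Ωm⁻¹‖ *
        ((M2 + (M1 * (∑ j, ‖dΩ j‖) + (k:ℝ) * (M1 * M3m) + K4)) * ((n:ℝ) ^ (-(1:ℝ)/2)))
        = (q:ℝ)^2 * ‖Ωm⁻¹‖ * (M2 + (M1 * (∑ j, ‖dΩ j‖) + (k:ℝ) * (M1 * M3m) + K4))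
            * ((n:ℝ) ^ (-(1:ℝ)/2)) := by ring
      _ ≤ 1/2 := hn
  filter_upwards [hE1, hIA, hIB, hsm, eventually_ge_atTop 1] with n hE1n hIAn hIBn hsmn hn1
  have hnpos : (0:ℝ) < n := by exact_mod_cast hn1
  have hspos : (0:ℝ) < (n:ℝ) ^ (-(1:ℝ)/2) := Real.rpow_pos_of_pos hnpos _
  have hs1 : (n:ℝ) ^ (-(1:ℝ)/2) ≤ 1 :=
    Real.rpow_le_one_of_one_le_of_nonpos (by exact_mod_cast hn1) (by norm_num)
  have hsqpos : (0:ℝ) < Real.sqrt n := Real.sqrt_pos.mpr hnpos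
  have hs2 : ((n:ℝ) ^ (-(1:ℝ)/2))^2 = (n:ℝ)⁻¹ := by
    rw [← Real.rpow_natCast ((n:ℝ) ^ (-(1:ℝ)/2)) 2, ← Real.rpow_mul hnpos.le]
    norm_num
    exact Real.rpow_neg_one _
  -- bad events
  set bad1 := {ω : Ωs | M1 < ‖θh1 n ω - θ0‖ / ((n:ℝ) ^ (-(1:ℝ)/2))} with hbad1
  set bad2 := {ω : Ωs | M2 * ((n:ℝ) ^ (-(1:ℝ)/2)) <
    ‖(n:ℝ)⁻¹ • (∑ i ∈ Finset.range n, vecMulVec (g (X i ω) θ0) (g (X i ω) θ0)) - Ωm‖} with hbad2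
  set bad3 := fun j : Fin k => {ω : Ωs | M3 j * ((n:ℝ) ^ (-(1:ℝ)/2)) <
    ‖(n:ℝ)⁻¹ • (∑ i ∈ Finset.range n,
        (vecMulVec (g (X i ω) θ0) (fun r' => B (X i ω) r' j)
          + vecMulVec (fun r' => B (X i ω) r' j) (g (X i ω) θ0))) - dΩ j‖} with hbad3
  set bad4 := {ω : Ωs | M4 * ((n:ℝ) ^ (-(1:ℝ)/2)) <
    |(n:ℝ)⁻¹ * (∑ i ∈ Finset.range n, ∑ r' : Fin q, ∑ c' : Fin k, (B (X i ω) r' c')^2)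
      - μ4|} with hbad4
  set badA := {ω : Ωs | ¬ IsUnit (Ωn n (θh1 n ω) ω).det} with hbadA
  set badB := {ω : Ωs | ¬ IsUnit (Ωn n θ0 ω).det} with hbadB
  -- inclusion of the big event in the bad events
  have hsub : {ω : Ωs | |(q:ℝ)^2 * (4 * ‖Ωm⁻¹‖^2 * ((k:ℝ) * (M1 * M3m) + K4)
      + 4 * (q:ℝ)^2 * ‖Ωm⁻¹‖^3
          * (M2 + (M1 * (∑ j, ‖dΩ j‖) + (k:ℝ) * (M1 * M3m) + K4)) * (M1 * (∑ j, ‖dΩ j‖))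
      + 2 * (q:ℝ)^2 * ‖Ωm⁻¹‖^3 * (M1 * (∑ j, ‖dΩ j‖)) * M2)| + 1 <
        ‖(Ωn n (θh1 n ω) ω)⁻¹ - (Ωn n θ0 ω)⁻¹
          + (Real.sqrt n)⁻¹ • (Ωm⁻¹ * (∑ j : Fin k,
              (Real.sqrt n * (θh1 n ω j - θ0 j)) • dΩ j) * Ωm⁻¹)‖ / (n:ℝ)⁻¹}
      ⊆ bad1 ∪ bad2 ∪ (⋃ j ∈ (Finset.univ : Finset (Fin k)), bad3 j) ∪ bad4 ∪ badA ∪ badB := by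
    intro ω hω
    simp only [Set.mem_setOf_eq] at hω
    by_contra hc
    simp only [Set.mem_union, not_or] at hc
    obtain ⟨⟨⟨⟨⟨h1, h2⟩, h3⟩, h4⟩, hA5⟩, hB5⟩ := hc
    have h3' : ∀ j : Fin k, ω ∉ bad3 j := fun j hj =>
      h3 (Set.mem_biUnion (Finset.mem_univ j) hj)
    -- extract good bounds
    have hδle : ‖θh1 n ω - θ0‖ ≤ M1 * ((n:ℝ) ^ (-(1:ℝ)/2)) := by
      rw [hbad1] at h1
      simp only [Set.mem_setOf_eq, not_lt] at h1
      exact (div_le_iff₀ hspos).mp h1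
    have hAunit : IsUnit (Ωn n (θh1 n ω) ω).det := by
      rw [hbadA] at hA5
      simpa using hA5
    have hBunit : IsUnit (Ωn n θ0 ω).det := by
      rw [hbadB] at hB5
      simpa using hB5
    set δv := θh1 n ω - θ0 with hδv_def
    set A := Ωn n (θh1 n ω) ω with hA_def
    set Bm := Ωn n θ0 ω with hBm_def
    set U : Fin k → Matrix (Fin q) (Fin q) ℝ := fun j => (n:ℝ)⁻¹ • ∑ i ∈ Finset.range n,
      (vecMulVec (g (X i ω) θ0) (fun r' => B (X i ω) r' j)
        + vecMulVec (fun r' => B (X i ω) r' j) (g (X i ω) θ0)) with hU_def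
    set T : Fin k → Matrix (Fin q) (Fin q) ℝ := fun j => U j - dΩ j with hT_def
    set Vq := (n:ℝ)⁻¹ • ∑ i ∈ Finset.range n,
      vecMulVec (B (X i ω) *ᵥ δv) (B (X i ω) *ᵥ δv) with hVq_def
    have hgsplit : ∀ i : ℕ, g (X i ω) (θh1 n ω) = g (X i ω) θ0 + B (X i ω) *ᵥ δv := by
      intro i
      rw [hg, hg]
      have hθeq : θh1 n ω = θ0 + δv := by rw [hδv_def]; abel
      rw [hθeq, Matrix.mulVec_add]
      abel
    have hABdec : A = Bm + (∑ j, δv j • U j) + Vq := by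
      rw [hA_def, hBm_def, hΩn n (θh1 n ω) ω, hΩn n θ0 ω]
      rw [Finset.sum_congr rfl fun i (_ : i ∈ Finset.range n) => by rw [hgsplit i]]
      exact InvWAux.decomp n (fun i => g (X i ω) θ0) (fun i => B (X i ω)) δv
    have hAB : A = Bm + (∑ j, δv j • (dΩ j + T j)) + Vq := by
      have hTj : ∀ j : Fin k, dΩ j + T j = U j := by
        intro j
        simp only [hT_def]
        abel
      rw [Finset.sum_congr rfl fun j (_ : j ∈ Finset.univ) => by rw [hTj j]]
      exact hABdec
    -- coordinatewise bounds
    have hδj : ∀ j, |δv j| ≤ M1 * ((n:ℝ) ^ (-(1:ℝ)/2)) := by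
      intro j
      calc |δv j| = ‖δv j‖ := (Real.norm_eq_abs _).symm
        _ ≤ ‖δv‖ := norm_le_pi_norm δv j
        _ ≤ M1 * ((n:ℝ) ^ (-(1:ℝ)/2)) := hδle
    have hBΩ : ‖Bm - Ωm‖ ≤ M2 * ((n:ℝ) ^ (-(1:ℝ)/2)) := by
      have hBmeq : Bm = (n:ℝ)⁻¹ • ∑ i ∈ Finset.range n,
          vecMulVec (g (X i ω) θ0) (g (X i ω) θ0) := by
        rw [hBm_def]; exact hΩn n θ0 ω
      rw [hbad2] at h2
      simp only [Set.mem_setOf_eq, not_lt] at h2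
      rw [hBmeq]
      exact h2
    have hTle : ∀ j, ‖T j‖ ≤ M3m * ((n:ℝ) ^ (-(1:ℝ)/2)) := by
      intro j
      have h3j := h3' j
      rw [hbad3] at h3j
      simp only [Set.mem_setOf_eq, not_lt] at h3j
      calc ‖T j‖ ≤ M3 j * ((n:ℝ) ^ (-(1:ℝ)/2)) := h3j
        _ ≤ M3m * ((n:ℝ) ^ (-(1:ℝ)/2)) := mul_le_mul_of_nonneg_right (hM3le j) hspos.le
    have hQle : (n:ℝ)⁻¹ * (∑ i ∈ Finset.range n,
        ∑ r' : Fin q, ∑ c' : Fin k, (B (X i ω) r' c')^2) ≤ μ4 + M4 := by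
      rw [hbad4] at h4
      simp only [Set.mem_setOf_eq, not_lt] at h4
      have habs := (abs_le.mp h4).2
      have hs' : M4 * ((n:ℝ) ^ (-(1:ℝ)/2)) ≤ M4 :=
        mul_le_of_le_one_right hM4pos.le hs1
      linarith
    have hVle : ‖Vq‖ ≤ K4 * ((n:ℝ) ^ (-(1:ℝ)/2))^2 := by
      have hvb := InvWAux.vq_bound n (fun i => B (X i ω)) δv
      have hQnn : (0:ℝ) ≤ (n:ℝ)⁻¹ * (∑ i ∈ Finset.range n,
          ∑ r' : Fin q, ∑ c' : Fin k, (B (X i ω) r' c')^2) := by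
        have : (0:ℝ) ≤ ∑ i ∈ Finset.range n, ∑ r' : Fin q, ∑ c' : Fin k, (B (X i ω) r' c')^2 :=
          Finset.sum_nonneg fun i _ => Finset.sum_nonneg fun r _ =>
            Finset.sum_nonneg fun c _ => sq_nonneg _
        positivity
      have hδ2 : ‖δv‖^2 ≤ (M1 * ((n:ℝ) ^ (-(1:ℝ)/2)))^2 :=
        pow_le_pow_left₀ (norm_nonneg _) hδle 2
      calc ‖Vq‖ ≤ (k:ℝ) * ‖δv‖^2 * ((n:ℝ)⁻¹ * ∑ i ∈ Finset.range n,
            ∑ r' : Fin q, ∑ c' : Fin k, (B (X i ω) r' c')^2) := hvb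
        _ ≤ (k:ℝ) * (M1 * ((n:ℝ) ^ (-(1:ℝ)/2)))^2 * (μ4 + M4) := by
            have hk : (0:ℝ) ≤ (k:ℝ) := Nat.cast_nonneg k
            have hg1 : (k:ℝ) * ‖δv‖^2 ≤ (k:ℝ) * (M1 * ((n:ℝ) ^ (-(1:ℝ)/2)))^2 :=
              mul_le_mul_of_nonneg_left hδ2 hk
            exact mul_le_mul hg1 hQle hQnn (by positivity)
        _ = K4 * ((n:ℝ) ^ (-(1:ℝ)/2))^2 := by rw [hK4_def]; ring
    have hsmall' : (q:ℝ)^2 * ‖Ωm⁻¹‖ *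
        ((M2 + (M1 * (∑ j, ‖dΩ j‖) + (k:ℝ) * (M1 * M3m) + K4)) * ((n:ℝ) ^ (-(1:ℝ)/2)))
          ≤ 1/2 := hsmn
    have hdet := InvWAux.det_core Ωm hΩunit dΩ A Bm hAunit hBunit δv T Vq hAB
      ((n:ℝ) ^ (-(1:ℝ)/2)) hspos hs1 M1 M2 M3m K4
      hM1pos.le hM2pos.le hM3mpos.le hK4nn hδj hBΩ hTle hVle hsmall'
    -- identify the remainder with the expression bounded by `det_core`
    have hsum : (∑ j : Fin k, (Real.sqrt n * (θh1 n ω j - θ0 j)) • dΩ j)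
        = Real.sqrt n • ∑ j, δv j • dΩ j := by
      rw [Finset.smul_sum]
      refine Finset.sum_congr rfl fun j _ => ?_
      rw [smul_smul, hδv_def]
      simp
    have hZeq : (Ωn n (θh1 n ω) ω)⁻¹ - (Ωn n θ0 ω)⁻¹
        + (Real.sqrt n)⁻¹ • (Ωm⁻¹ * (∑ j : Fin k,
            (Real.sqrt n * (θh1 n ω j - θ0 j)) • dΩ j) * Ωm⁻¹)
        = A⁻¹ - Bm⁻¹ + Ωm⁻¹ * (∑ j, δv j • dΩ j) * Ωm⁻¹ := by
      rw [hsum, Matrix.mul_smul, Matrix.smul_mul, smul_smul,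
        inv_mul_cancel₀ (ne_of_gt hsqpos), one_smul]
    have hZle : ‖(Ωn n (θh1 n ω) ω)⁻¹ - (Ωn n θ0 ω)⁻¹
        + (Real.sqrt n)⁻¹ • (Ωm⁻¹ * (∑ j : Fin k,
            (Real.sqrt n * (θh1 n ω j - θ0 j)) • dΩ j) * Ωm⁻¹)‖
        ≤ ((q:ℝ)^2 * (4 * ‖Ωm⁻¹‖^2 * ((k:ℝ) * (M1 * M3m) + K4)
          + 4 * (q:ℝ)^2 * ‖Ωm⁻¹‖^3
              * (M2 + (M1 * (∑ j, ‖dΩ j‖) + (k:ℝ) * (M1 * M3m) + K4)) * (M1 * (∑ j, ‖dΩ j‖))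
          + 2 * (q:ℝ)^2 * ‖Ωm⁻¹‖^3 * (M1 * (∑ j, ‖dΩ j‖)) * M2)) * ((n:ℝ) ^ (-(1:ℝ)/2))^2 := by
      rw [hZeq]
      exact hdet
    have hfin : ‖(Ωn n (θh1 n ω) ω)⁻¹ - (Ωn n θ0 ω)⁻¹
        + (Real.sqrt n)⁻¹ • (Ωm⁻¹ * (∑ j : Fin k,
            (Real.sqrt n * (θh1 n ω j - θ0 j)) • dΩ j) * Ωm⁻¹)‖ / (n:ℝ)⁻¹
        ≤ |(q:ℝ)^2 * (4 * ‖Ωm⁻¹‖^2 * ((k:ℝ) * (M1 * M3m) + K4)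
          + 4 * (q:ℝ)^2 * ‖Ωm⁻¹‖^3
              * (M2 + (M1 * (∑ j, ‖dΩ j‖) + (k:ℝ) * (M1 * M3m) + K4)) * (M1 * (∑ j, ‖dΩ j‖))
          + 2 * (q:ℝ)^2 * ‖Ωm⁻¹‖^3 * (M1 * (∑ j, ‖dΩ j‖)) * M2)| + 1 := by
      rw [div_inv_eq_mul]
      calc ‖(Ωn n (θh1 n ω) ω)⁻¹ - (Ωn n θ0 ω)⁻¹
          + (Real.sqrt n)⁻¹ • (Ωm⁻¹ * (∑ j : Fin k,
              (Real.sqrt n * (θh1 n ω j - θ0 j)) • dΩ j) * Ωm⁻¹)‖ * (n:ℝ)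
          ≤ (((q:ℝ)^2 * (4 * ‖Ωm⁻¹‖^2 * ((k:ℝ) * (M1 * M3m) + K4)
            + 4 * (q:ℝ)^2 * ‖Ωm⁻¹‖^3
                * (M2 + (M1 * (∑ j, ‖dΩ j‖) + (k:ℝ) * (M1 * M3m) + K4)) * (M1 * (∑ j, ‖dΩ j‖))
            + 2 * (q:ℝ)^2 * ‖Ωm⁻¹‖^3 * (M1 * (∑ j, ‖dΩ j‖)) * M2))
              * ((n:ℝ) ^ (-(1:ℝ)/2))^2) * (n:ℝ) :=
            mul_le_mul_of_nonneg_right hZle hnpos.le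
        _ = ((q:ℝ)^2 * (4 * ‖Ωm⁻¹‖^2 * ((k:ℝ) * (M1 * M3m) + K4)
            + 4 * (q:ℝ)^2 * ‖Ωm⁻¹‖^3
                * (M2 + (M1 * (∑ j, ‖dΩ j‖) + (k:ℝ) * (M1 * M3m) + K4)) * (M1 * (∑ j, ‖dΩ j‖))
            + 2 * (q:ℝ)^2 * ‖Ωm⁻¹‖^3 * (M1 * (∑ j, ‖dΩ j‖)) * M2))
              * (((n:ℝ) ^ (-(1:ℝ)/2))^2 * (n:ℝ)) := by ring
        _ = ((q:ℝ)^2 * (4 * ‖Ωm⁻¹‖^2 * ((k:ℝ) * (M1 * M3m) + K4)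
            + 4 * (q:ℝ)^2 * ‖Ωm⁻¹‖^3
                * (M2 + (M1 * (∑ j, ‖dΩ j‖) + (k:ℝ) * (M1 * M3m) + K4)) * (M1 * (∑ j, ‖dΩ j‖))
            + 2 * (q:ℝ)^2 * ‖Ωm⁻¹‖^3 * (M1 * (∑ j, ‖dΩ j‖)) * M2)) := by
              rw [hs2, inv_mul_cancel₀ (ne_of_gt hnpos), mul_one]
        _ ≤ _ := by
              have := le_abs_self ((q:ℝ)^2 * (4 * ‖Ωm⁻¹‖^2 * ((k:ℝ) * (M1 * M3m) + K4)
                + 4 * (q:ℝ)^2 * ‖Ωm⁻¹‖^3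
                    * (M2 + (M1 * (∑ j, ‖dΩ j‖) + (k:ℝ) * (M1 * M3m) + K4))
                    * (M1 * (∑ j, ‖dΩ j‖))
                + 2 * (q:ℝ)^2 * ‖Ωm⁻¹‖^3 * (M1 * (∑ j, ‖dΩ j‖)) * M2))
              linarith
    exact absurd hω (not_lt.mpr hfin)
  -- final measure computation
  refine lt_of_le_of_lt (measure_mono hsub) ?_
  have h3lt : P (⋃ j ∈ (Finset.univ : Finset (Fin k)), bad3 j) < ENNReal.ofReal (ε/6) := by
    calc P (⋃ j ∈ (Finset.univ : Finset (Fin k)), bad3 j)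
        ≤ ∑ j : Fin k, P (bad3 j) := measure_biUnion_finset_le _ _
      _ ≤ ∑ _j : Fin k, ENNReal.ofReal (ε/(6*(k+1))) :=
          Finset.sum_le_sum fun j _ => (hE3 j n hn1).le
      _ = (k : ℕ) * ENNReal.ofReal (ε/(6*(k+1))) := by
          simp [Finset.card_univ, mul_comm]
      _ = ENNReal.ofReal ((k:ℝ) * (ε/(6*(k+1)))) := by
          rw [ENNReal.ofReal_mul (Nat.cast_nonneg k), ENNReal.ofReal_natCast]
      _ < ENNReal.ofReal (ε/6) := by
          rw [ENNReal.ofReal_lt_ofReal_iff hc6]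
          rw [mul_div_assoc']
          rw [div_lt_div_iff₀ (by positivity) (by norm_num : (0:ℝ) < 6)]
          nlinarith [Nat.cast_nonneg (α := ℝ) k]
  have h1lt : P bad1 < ENNReal.ofReal (ε/6) := hE1n
  have h2lt : P bad2 < ENNReal.ofReal (ε/6) := hE2 n hn1
  have h4lt : P bad4 < ENNReal.ofReal (ε/6) := hE4 n hn1
  have hAlt : P badA < ENNReal.ofReal (ε/6) := hIAn
  have hBlt : P badB < ENNReal.ofReal (ε/6) := hIBn
  calc P (bad1 ∪ bad2 ∪ (⋃ j ∈ (Finset.univ : Finset (Fin k)), bad3 j) ∪ bad4 ∪ badA ∪ badB)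
      ≤ P (bad1 ∪ bad2 ∪ (⋃ j ∈ (Finset.univ : Finset (Fin k)), bad3 j) ∪ bad4 ∪ badA)
        + P badB := measure_union_le _ _
    _ ≤ (P (bad1 ∪ bad2 ∪ (⋃ j ∈ (Finset.univ : Finset (Fin k)), bad3 j) ∪ bad4) + P badA)
        + P badB := add_le_add_left (measure_union_le _ _) _
    _ ≤ ((P (bad1 ∪ bad2 ∪ (⋃ j ∈ (Finset.univ : Finset (Fin k)), bad3 j)) + P bad4)
        + P badA) + P badB :=
          add_le_add_left (add_le_add_left (measure_union_le _ _) _) _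
    _ ≤ (((P (bad1 ∪ bad2) + P (⋃ j ∈ (Finset.univ : Finset (Fin k)), bad3 j)) + P bad4)
        + P badA) + P badB :=
          add_le_add_left (add_le_add_left (add_le_add_left (measure_union_le _ _) _) _) _
    _ ≤ ((((P bad1 + P bad2) + P (⋃ j ∈ (Finset.univ : Finset (Fin k)), bad3 j)) + P bad4)
        + P badA) + P badB :=
          add_le_add_left (add_le_add_left (add_le_add_left
            (add_le_add_left (measure_union_le _ _) _) _) _) _
    _ < ((((ENNReal.ofReal (ε/6) + ENNReal.ofReal (ε/6)) + ENNReal.ofReal (ε/6))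
        + ENNReal.ofReal (ε/6)) + ENNReal.ofReal (ε/6)) + ENNReal.ofReal (ε/6) :=
          ENNReal.add_lt_add (ENNReal.add_lt_add (ENNReal.add_lt_add
            (ENNReal.add_lt_add (ENNReal.add_lt_add h1lt h2lt) h3lt) h4lt) hAlt) hBlt
    _ = ENNReal.ofReal ε := by
        rw [← ENNReal.ofReal_add (by positivity) (by positivity),
          ← ENNReal.ofReal_add (by positivity) (by positivity),
          ← ENNReal.ofReal_add (by positivity) (by positivity),
          ← ENNReal.ofReal_add (by positivity) (by positivity),
          ← ENNReal.ofReal_add (by positivity) (by positivity)]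
        congr 1
        ring
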